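/- If a polygonal 2-tree has at least two chordless cycles, then it has a leaf polygon: a chordless cycle P such that exactly one edge of P is also an edge of some other chordless cycle. -/

import Mathlib

open SimpleGraph

/-- The graph obtained from `G` by adding a path of `m` new vertices `w_0, …, w_{m-1}`
together with the edges `{u, w_0}`, `{w_i, w_{i+1}}` for `i + 1 < m`, and `{w_{m-1}, v}`,
thereby creating a new cycle of length `m + 2` through the edge `{u, v}`. -/
def SimpleGraph.pathExtend {V : Type} (G : SimpleGraph V) (u v : V) (m : ℕ) :
    SimpleGraph (V ⊕ Fin m) :=
  SimpleGraph.fromRel (fun a b =>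
    (∃ x y : V, a = Sum.inl x ∧ b = Sum.inl y ∧ G.Adj x y) ∨
    (∃ i : Fin m, a = Sum.inl u ∧ b = Sum.inr i ∧ i.val = 0) ∨
    (∃ i j : Fin m, a = Sum.inr i ∧ b = Sum.inr j ∧ j.val = i.val + 1) ∨
    (∃ i : Fin m, a = Sum.inr i ∧ b = Sum.inl v ∧ i.val = m - 1))

/-- A polygonal 2-tree: any cycle graph on `k ≥ 3` vertices is a polygonal 2-tree, and
any graph obtained from a polygonal 2-tree by adding a path of `m ≥ 1` new vertices
whose ends are joined to the two endpoints of an existing edge (creating a new cycle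
of length `m + 2` through that edge) is again a polygonal 2-tree (up to isomorphism). -/
inductive SimpleGraph.IsPolygonal2Tree : {V : Type} → SimpleGraph V → Prop
  | cycle {V : Type} {G : SimpleGraph V} {k : ℕ} (hk : 3 ≤ k)
      (iso : Nonempty (G ≃g SimpleGraph.cycleGraph k)) : G.IsPolygonal2Tree
  | extend {V : Type} {G : SimpleGraph V} {u v : V} (huv : G.Adj u v)
      {m : ℕ} (hm : 1 ≤ m) {W : Type} {H : SimpleGraph W}
      (iso : Nonempty (H ≃g G.pathExtend u v m)) :
      G.IsPolygonal2Tree → H.IsPolygonal2Tree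

/-- A chordless cycle of `G`, identified with its vertex set `s`: the subgraph of `G`
induced on `s` is a cycle graph on at least three vertices (so in particular no two
non-consecutive vertices of the cycle are adjacent in `G`). -/
def SimpleGraph.IsChordlessCycle {V : Type} (G : SimpleGraph V) (s : Set V) : Prop :=
  3 ≤ Nat.card s ∧ Nonempty (G.induce s ≃g SimpleGraph.cycleGraph (Nat.card s))

/-!
The polygon created by the last step of the construction is a leaf. Its new vertices have degree
two, so a chordless cycle through one of them contains both of its neighbours and, walking along
the new path, the whole new polygon; since one chordless cycle contained in another equals it
(both are connected and 2-regular), the new polygon is the only chordless cycle through a new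
vertex. Hence the only edge it can share is the edge `{u, v}` it was glued to, and that edge is
shared because every edge of a polygonal 2-tree lies on a polygon. In the base case the cycle
graph itself is the only chordless cycle, which contradicts the hypothesis.
-/

namespace SimpleGraph

variable {V W : Type} {G : SimpleGraph V} {H : SimpleGraph W}

theorem Preconnected.eq_univ_of_adj_closed (hG : G.Preconnected) {T : Set V} {x : V}
    (hx : x ∈ T) (hT : ∀ a ∈ T, ∀ b, G.Adj a b → b ∈ T) : T = Set.univ :=
  Set.eq_univ_of_forall fun y => by
    induction (reachable_iff_reflTransGen x y).mp (hG x y) with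
    | refl => exact hx
    | tail _ hab ih => exact hT _ ih _ hab

theorem isChordlessCycle_univ_of_iso {k : ℕ} (hk : 3 ≤ k) (f : G ≃g cycleGraph k) :
    G.IsChordlessCycle Set.univ := by
  have hcard : Nat.card (Set.univ : Set V) = k := by
    rw [Nat.card_univ, Nat.card_congr f.toEquiv, Nat.card_fin]
  exact ⟨hcard ▸ hk, ⟨hcard ▸ (induceUnivIso G).trans f⟩⟩

theorem IsChordlessCycle.map (f : G ↪g H) {s : Set V} (hs : G.IsChordlessCycle s) :
    H.IsChordlessCycle (f '' s) := by
  obtain ⟨h3, ⟨e⟩⟩ := hs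
  have hcard : Nat.card (f '' s) = Nat.card s := Nat.card_image_of_injective f.injective s
  let g : G.induce s ≃g H.induce (f '' s) :=
    { Equiv.Set.image f s f.injective with
      map_rel_iff' := f.map_adj_iff }
  exact ⟨hcard ▸ h3, ⟨hcard ▸ g.symm.trans e⟩⟩

namespace IsChordlessCycle

variable {s t : Set V} {x : V}

theorem nonempty (hs : G.IsChordlessCycle s) : s.Nonempty := by
  rw [Set.nonempty_iff_ne_empty]
  rintro rfl
  simpa using hs.1

theorem preconnected_induce (hs : G.IsChordlessCycle s) : (G.induce s).Preconnected :=
  let ⟨_, ⟨e⟩⟩ := hs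
  cycleGraph_preconnected.map e.symm.toHom e.symm.surjective

theorem encard_neighborSet_inter (hs : G.IsChordlessCycle s) (hx : x ∈ s) :
    (G.neighborSet x ∩ s).encard = 2 := by
  obtain ⟨h3, ⟨e⟩⟩ := hs
  obtain ⟨k, hk⟩ : ∃ k, Nat.card s = k + 3 := ⟨Nat.card s - 3, by omega⟩
  rw [hk] at e
  have hinduce : G.neighborSet x ∩ s = Subtype.val '' (G.induce s).neighborSet ⟨x, hx⟩ := by
    rw [Set.inter_comm, ← Subtype.image_preimage_coe]
    rfl
  rw [hinduce, Subtype.val_injective.encard_image, ← e.injective.encard_image,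
    e.image_neighborSet, ← coe_neighborFinset, Set.encard_coe_eq_coe_finsetCard,
    card_neighborFinset_eq_degree, cycleGraph_degree_three_le]
  rfl

theorem neighborSet_subset (hs : G.IsChordlessCycle s) (hx : x ∈ s)
    (hdeg : (G.neighborSet x).encard ≤ 2) : G.neighborSet x ⊆ s := by
  have h2 := hs.encard_neighborSet_inter hx
  have hfin : (G.neighborSet x ∩ s).Finite := Set.finite_of_encard_eq_coe h2
  exact Set.inter_eq_left.mp (hfin.eq_of_subset_of_encard_le Set.inter_subset_left (h2 ▸ hdeg))

theorem eq_of_subset (hs : G.IsChordlessCycle s) (ht : G.IsChordlessCycle t) (hts : t ⊆ s) :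
    t = s := by
  obtain ⟨x, hx⟩ := ht.nonempty
  have hclosed : ∀ a ∈ t, ∀ b ∈ s, G.Adj a b → b ∈ t := by
    intro a ha b hb hab
    have h2 := ht.encard_neighborSet_inter ha
    have hsame : G.neighborSet a ∩ t = G.neighborSet a ∩ s :=
      (Set.finite_of_encard_eq_coe h2).eq_of_subset_of_encard_le
        (Set.inter_subset_inter_right _ hts) (by rw [h2, hs.encard_neighborSet_inter (hts ha)])
    exact (hsame.symm.subset ⟨hab, hb⟩).2
  have huniv : {a : s | a.1 ∈ t} = Set.univ :=
    hs.preconnected_induce.eq_univ_of_adj_closed (x := ⟨x, hts hx⟩) hx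
      fun a ha b hab => hclosed a ha b b.2 hab
  exact hts.antisymm fun y hy => huniv.symm.subset (Set.mem_univ ⟨y, hy⟩)

end IsChordlessCycle

def IsSharedEdge (G : SimpleGraph V) (P : Set V) (e : Sym2 V) : Prop :=
  (e ∈ G.edgeSet ∧ ∀ x ∈ e, x ∈ P) ∧
    ∃ Q : Set V, G.IsChordlessCycle Q ∧ Q ≠ P ∧ ∀ x ∈ e, x ∈ Q

def IsLeafPolygon (G : SimpleGraph V) (P : Set V) : Prop :=
  G.IsChordlessCycle P ∧ ∃! e, G.IsSharedEdge P e

theorem IsSharedEdge.map (f : G ≃g H) {P : Set V} {e : Sym2 V} (he : G.IsSharedEdge P e) :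
    H.IsSharedEdge (f '' P) (e.map f) := by
  obtain ⟨⟨hedge, heP⟩, Q, hQ, hQP, heQ⟩ := he
  have hmap : ∀ {S : Set V}, (∀ x ∈ e, x ∈ S) → ∀ y ∈ e.map f, y ∈ f '' S := by
    intro S hS y hy
    obtain ⟨x, hx, rfl⟩ := Sym2.mem_map.mp hy
    exact ⟨x, hS x hx, rfl⟩
  exact ⟨⟨f.map_mem_edgeSet_iff.mpr hedge, hmap heP⟩, f '' Q, hQ.map f.toEmbedding,
    (Set.image_injective.mpr f.injective).ne hQP, hmap heQ⟩

theorem IsLeafPolygon.map (f : G ≃g H) {P : Set V} (hP : G.IsLeafPolygon P) :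
    H.IsLeafPolygon (f '' P) := by
  obtain ⟨hPc, e, he, huniq⟩ := hP
  refine ⟨hPc.map f.toEmbedding, e.map f, he.map f, fun e' he' => ?_⟩
  have hpull := he'.map f.symm
  simp only [Set.image_image, RelIso.symm_apply_apply, Set.image_id'] at hpull
  rw [← huniq _ hpull, Sym2.map_map]
  simp

theorem cycleGraph_adj_iff_val {n : ℕ} {a b : Fin (n + 2)} :
    (cycleGraph (n + 2)).Adj a b ↔ a.val + 1 = b.val ∨ b.val + 1 = a.val ∨
      (a.val = 0 ∧ b.val = n + 1) ∨ (b.val = 0 ∧ a.val = n + 1) := by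
  have := a.isLt; have := b.isLt
  rw [cycleGraph_adj']
  rcases lt_trichotomy a b with h | rfl | h
  · rw [Fin.coe_sub_iff_lt.mpr h, Fin.sub_val_of_le h.le, Fin.lt_def] at *; omega
  · simp only [sub_self, Fin.val_zero]; omega
  · rw [Fin.coe_sub_iff_lt.mpr h, Fin.sub_val_of_le h.le, Fin.lt_def] at *; omega

section pathExtend

variable {u v : V} {m : ℕ}

@[simp]
theorem pathExtend_adj_inl_inl {x y : V} :
    (G.pathExtend u v m).Adj (.inl x) (.inl y) ↔ G.Adj x y := by
  simpa [pathExtend, G.adj_comm y x] using fun h => h.ne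

@[simp]
theorem pathExtend_adj_inl_inr {x : V} {i : Fin m} :
    (G.pathExtend u v m).Adj (.inl x) (.inr i) ↔
      x = u ∧ i.val = 0 ∨ x = v ∧ i.val = m - 1 := by
  simp only [pathExtend, fromRel_adj]
  aesop

@[simp]
theorem pathExtend_adj_inr_inl {x : V} {i : Fin m} :
    (G.pathExtend u v m).Adj (.inr i) (.inl x) ↔
      x = u ∧ i.val = 0 ∨ x = v ∧ i.val = m - 1 := by
  rw [adj_comm, pathExtend_adj_inl_inr]

@[simp]
theorem pathExtend_adj_inr_inr {i j : Fin m} :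
    (G.pathExtend u v m).Adj (.inr i) (.inr j) ↔ (pathGraph m).Adj i j := by
  simp only [pathExtend, fromRel_adj, pathGraph_adj]
  aesop

variable (G u v m) in
def pathExtendInl : G ↪g G.pathExtend u v m where
  toEmbedding := .inl
  map_rel_iff' := pathExtend_adj_inl_inl

@[simp]
theorem pathExtendInl_apply (x : V) : pathExtendInl G u v m x = .inl x := rfl

def pathExtendPolygon (u v : V) (m : ℕ) : Set (V ⊕ Fin m) :=
  {.inl u, .inl v} ∪ Set.range .inr

theorem inr_mem_pathExtendPolygon (i : Fin m) : .inr i ∈ pathExtendPolygon u v m :=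
  Or.inr ⟨i, rfl⟩

def pathExtendCycleMap (u v : V) (m : ℕ) (j : Fin (m + 2)) : V ⊕ Fin m :=
  if h0 : j.val = 0 then .inl u
  else if h : j.val ≤ m then .inr ⟨j.val - 1, by omega⟩
  else .inl v

theorem pathExtendCycleMap_injective (huv : u ≠ v) :
    Function.Injective (pathExtendCycleMap u v m) := by
  intro a b hab
  rw [Fin.ext_iff]
  unfold pathExtendCycleMap at hab
  split_ifs at hab <;> simp only [Sum.inl.injEq, Sum.inr.injEq, Fin.ext_iff] at hab
  all_goals first | omega | exact absurd hab huv | exact absurd hab.symm huv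

theorem pathExtend_adj_pathExtendCycleMap (huv : G.Adj u v) {a b : Fin (m + 2)} :
    (G.pathExtend u v m).Adj (pathExtendCycleMap u v m a) (pathExtendCycleMap u v m b) ↔
      (cycleGraph (m + 2)).Adj a b := by
  have := a.isLt; have := b.isLt
  rw [cycleGraph_adj_iff_val]
  unfold pathExtendCycleMap
  split_ifs <;> simp only [pathExtend_adj_inl_inl, pathExtend_adj_inl_inr, pathExtend_adj_inr_inl,
    pathExtend_adj_inr_inr, pathGraph_adj, huv, huv.symm, huv.ne, huv.ne.symm, G.irrefl, true_and,
    false_and, true_iff, false_iff, or_false, false_or]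
  all_goals omega

def pathExtendCycleEmbedding (huv : G.Adj u v) : cycleGraph (m + 2) ↪g G.pathExtend u v m where
  toFun := pathExtendCycleMap u v m
  inj' := pathExtendCycleMap_injective huv.ne
  map_rel_iff' := pathExtend_adj_pathExtendCycleMap huv

theorem range_pathExtendCycleEmbedding (huv : G.Adj u v) :
    Set.range (pathExtendCycleEmbedding (m := m) huv) = pathExtendPolygon u v m := by
  ext x
  simp only [pathExtendCycleEmbedding, RelEmbedding.coe_mk, Function.Embedding.coeFn_mk,
    Set.mem_range, pathExtendPolygon, Set.mem_union, Set.mem_insert_iff, Set.mem_singleton_iff]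
  constructor
  · rintro ⟨j, rfl⟩
    unfold pathExtendCycleMap
    split_ifs <;> simp
  · rintro ((rfl | rfl) | ⟨i, rfl⟩)
    · exact ⟨0, by simp [pathExtendCycleMap]⟩
    · exact ⟨Fin.last _, by simp [pathExtendCycleMap]⟩
    · refine ⟨⟨i.val + 1, by omega⟩, ?_⟩
      simp [pathExtendCycleMap]

theorem isChordlessCycle_pathExtendPolygon (huv : G.Adj u v) (hm : 1 ≤ m) :
    (G.pathExtend u v m).IsChordlessCycle (pathExtendPolygon u v m) := by
  rw [← range_pathExtendCycleEmbedding huv, ← Set.image_univ]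
  exact (isChordlessCycle_univ_of_iso (by omega) (G := cycleGraph (m + 2)) Iso.refl).map _

theorem pathExtend_neighborSet_inr_subset (i : Fin m) :
    (G.pathExtend u v m).neighborSet (.inr i) ⊆ pathExtendPolygon u v m := by
  rintro (x | j) hx
  · simp only [mem_neighborSet, pathExtend_adj_inr_inl] at hx
    rcases hx with ⟨rfl, -⟩ | ⟨rfl, -⟩ <;> simp [pathExtendPolygon]
  · exact inr_mem_pathExtendPolygon j

theorem eq_pathExtendPolygon_of_inr_mem (huv : G.Adj u v) (hm : 1 ≤ m)
    {s : Set (V ⊕ Fin m)} (hs : (G.pathExtend u v m).IsChordlessCycle s) {i : Fin m}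
    (hi : .inr i ∈ s) : s = pathExtendPolygon u v m := by
  have hP := isChordlessCycle_pathExtendPolygon huv hm
  have hnbr : ∀ j : Fin m, .inr j ∈ s → (G.pathExtend u v m).neighborSet (.inr j) ⊆ s := by
    intro j hj
    refine hs.neighborSet_subset hj (le_of_eq ?_)
    rw [← Set.inter_eq_left.mpr (pathExtend_neighborSet_inr_subset j),
      hP.encard_neighborSet_inter (inr_mem_pathExtendPolygon j)]
  have hpath : {j : Fin m | .inr j ∈ s} = Set.univ :=
    (pathGraph_preconnected m).eq_univ_of_adj_closed hi fun j hj k hjk =>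
      hnbr j hj (pathExtend_adj_inr_inr.mpr hjk)
  have hinr : ∀ j : Fin m, .inr j ∈ s := fun j => hpath.symm.subset (Set.mem_univ j)
  have hu : .inl u ∈ s := hnbr ⟨0, hm⟩ (hinr _) (by simp)
  have hv : .inl v ∈ s := hnbr ⟨m - 1, by omega⟩ (hinr _) (by simp)
  refine (hs.eq_of_subset hP ?_).symm
  rintro x ((rfl | rfl) | ⟨j, rfl⟩)
  exacts [hu, hv, hinr j]

theorem pathExtend_exists_isChordlessCycle_of_adj (huv : G.Adj u v) (hm : 1 ≤ m)
    (hG : ∀ x y, G.Adj x y → ∃ s, G.IsChordlessCycle s ∧ x ∈ s ∧ y ∈ s)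
    {a b : V ⊕ Fin m} (hab : (G.pathExtend u v m).Adj a b) :
    ∃ s, (G.pathExtend u v m).IsChordlessCycle s ∧ a ∈ s ∧ b ∈ s := by
  have hP := isChordlessCycle_pathExtendPolygon huv hm
  rcases a with x | i
  · rcases b with y | j
    · obtain ⟨s, hs, hx, hy⟩ := hG x y (pathExtend_adj_inl_inl.mp hab)
      exact ⟨_, hs.map (pathExtendInl G u v m), ⟨x, hx, rfl⟩, ⟨y, hy, rfl⟩⟩
    · exact ⟨_, hP, pathExtend_neighborSet_inr_subset j hab.symm, inr_mem_pathExtendPolygon j⟩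
  · exact ⟨_, hP, inr_mem_pathExtendPolygon i, pathExtend_neighborSet_inr_subset i hab⟩

theorem isLeafPolygon_pathExtendPolygon (huv : G.Adj u v) (hm : 1 ≤ m)
    {s : Set V} (hs : G.IsChordlessCycle s) (hus : u ∈ s) (hvs : v ∈ s) :
    (G.pathExtend u v m).IsLeafPolygon (pathExtendPolygon u v m) := by
  refine ⟨isChordlessCycle_pathExtendPolygon huv hm, s(.inl u, .inl v),
    ⟨⟨pathExtend_adj_inl_inl.mpr huv, ?_⟩, _, hs.map (pathExtendInl G u v m), ?_, ?_⟩, ?_⟩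
  · simp [pathExtendPolygon]
  · intro h
    have h0 := inr_mem_pathExtendPolygon (u := u) (v := v) (⟨0, hm⟩ : Fin m)
    rw [← h] at h0
    simp at h0
  · simp [hus, hvs]
  · rintro e ⟨⟨he, heP⟩, Q, hQ, hQP, heQ⟩
    have hold : ∀ x ∈ e, x = .inl u ∨ x = .inl v := by
      intro x hx
      rcases heP x hx with (h | h) | ⟨i, rfl⟩
      · exact .inl h
      · exact .inr h
      · exact absurd (eq_pathExtendPolygon_of_inr_mem huv hm hQ (heQ _ hx)) hQP
    induction e using Sym2.ind with
    | _ x y =>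
      have hxy : x ≠ y := (mem_edgeSet _).mp he |>.ne
      rcases hold x (Sym2.mem_mk_left x y) with rfl | rfl <;>
        rcases hold y (Sym2.mem_mk_right _ y) with rfl | rfl
      exacts [absurd rfl hxy, rfl, Sym2.eq_swap, absurd rfl hxy]

end pathExtend

theorem IsPolygonal2Tree.exists_isChordlessCycle_of_adj (h : G.IsPolygonal2Tree) {x y : V}
    (hxy : G.Adj x y) : ∃ s, G.IsChordlessCycle s ∧ x ∈ s ∧ y ∈ s := by
  induction h with
  | cycle hk iso => exact ⟨_, isChordlessCycle_univ_of_iso hk iso.some, trivial, trivial⟩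
  | extend huv hm iso _ ih =>
    obtain ⟨f⟩ := iso
    obtain ⟨s, hs, hx, hy⟩ :=
      pathExtend_exists_isChordlessCycle_of_adj huv hm (fun _ _ => ih) (f.map_adj_iff.mpr hxy)
    exact ⟨f.symm '' s, hs.map f.symm.toEmbedding, ⟨_, hx, f.symm_apply_apply x⟩,
      ⟨_, hy, f.symm_apply_apply y⟩⟩

end SimpleGraph

/-- A polygonal 2-tree with at least two chordless cycles has a leaf polygon: a
chordless cycle `P` such that exactly one edge of `P` is also an edge of some other
chordless cycle. -/
theorem polygonal2Tree_exists_leaf_polygon {V : Type} (G : SimpleGraph V)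
    (h : G.IsPolygonal2Tree)
    (h2 : ∃ s t : Set V, G.IsChordlessCycle s ∧ G.IsChordlessCycle t ∧ s ≠ t) :
    ∃ P : Set V, G.IsChordlessCycle P ∧
      ∃! e : Sym2 V, (e ∈ G.edgeSet ∧ ∀ x ∈ e, x ∈ P) ∧
        ∃ Q : Set V, G.IsChordlessCycle Q ∧ Q ≠ P ∧ ∀ x ∈ e, x ∈ Q := by
  induction h with
  | cycle hk iso =>
    obtain ⟨s, t, hs, ht, hst⟩ := h2
    have huniv := isChordlessCycle_univ_of_iso hk iso.some
    exact absurd ((huniv.eq_of_subset hs s.subset_univ).trans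
      (huniv.eq_of_subset ht t.subset_univ).symm) hst
  | extend huv hm iso hG =>
    obtain ⟨s, hs, hus, hvs⟩ := hG.exists_isChordlessCycle_of_adj huv
    exact ⟨_, (isLeafPolygon_pathExtendPolygon huv hm hs hus hvs).map iso.some.symm⟩
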